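/- For Hankel-type determinants built from c : ℕ → ℝ, the identity F^1_n H^0_n − F^0_n H^1_n = G^1_{n-1} H^0_{n+1} holds for all n ≥ 3. -/

import Mathlib

/-!
The identity is the Desnanot–Jacobi identity for the Hankel matrix `M = (c_{i+j})` of size
`n + 1`, with rows `0, n` and columns `n - 2, n` removed: the four cofactors are `± F¹_n`, `H⁰_n`,
`± H¹_n`, `F⁰_n`, and the minor with both rows and both columns removed is the transpose of the
matrix of `G¹_{n-1}`.

Desnanot–Jacobi itself: if `E` is the identity with columns `p, q` replaced by the columns
`a, b` of `adj M`, then `M * E` is `M` with these columns replaced by `det M • e_a, det M • e_b`,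
and `det E` is a `2 × 2` minor of `adj M`. Comparing determinants gives the identity multiplied
by `det M`; the factor cancels for the generic matrix over `ℤ[X_ij]`, and the general case
follows by specialization.
-/

/-- Hankel determinant `H^m_n = det(c_{i+j+m})`. -/
noncomputable def Hk (c : ℕ → ℝ) (m n : ℕ) : ℝ :=
  (Matrix.of fun i j : Fin n => c (i.val + j.val + m)).det

/-- `G^m_n`: the Hankel determinant `H^m_n` with its last row
`(c_{m+n-1},…,c_{m+2n-2})` replaced by `(c_{m+n},…,c_{m+2n-1})`;
by convention `G^m_0 = 0`. -/
noncomputable def Gk (c : ℕ → ℝ) (m n : ℕ) : ℝ :=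
  if n = 0 then 0 else
  (Matrix.of fun i j : Fin n =>
    if i.val = n - 1 then c (m + n + j.val) else c (i.val + j.val + m)).det

/-- `E^m_n`: determinant of the `n×n` matrix with rows
`(c_{m+k},…,c_{m+k+n-2}, c_{m+k+n+1})`, i.e. the last column advanced by 2. -/
noncomputable def Ek (c : ℕ → ℝ) (m n : ℕ) : ℝ :=
  (Matrix.of fun i j : Fin n =>
    if j.val = n - 1 then c (m + i.val + n + 1) else c (m + i.val + j.val)).det

/-- `F^m_n`: determinant of the `n×n` matrix with rows
`(c_{m+k},…,c_{m+k+n-3}, c_{m+k+n-1}, c_{m+k+n})`, i.e. column `n−2` skipped;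
by convention `F^m_1 = 0`. -/
noncomputable def Fk (c : ℕ → ℝ) (m n : ℕ) : ℝ :=
  if n = 1 then 0 else
  (Matrix.of fun i j : Fin n =>
    if n - 2 ≤ j.val then c (m + i.val + j.val + 1) else c (m + i.val + j.val)).det

/-- `S^m_n`: determinant of `(c_{m+σ(i)+σ(j)})` where `σ(i) = i` for `i ≤ n−2`
and `σ(n−1) = n`. -/
noncomputable def Sk (c : ℕ → ℝ) (m n : ℕ) : ℝ :=
  (Matrix.of fun i j : Fin n =>
    c (m + (if i.val = n - 1 then n else i.val) +
        (if j.val = n - 1 then n else j.val))).det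

namespace Matrix

variable {n R : Type*} [Fintype n] [DecidableEq n] [CommRing R]

theorem det_one_updateCol (j : n) (w : n → R) : ((1 : Matrix n n R).updateCol j w).det = w j := by
  rw [← cramer_apply, cramer_one]
  rfl

theorem det_one_updateCol_updateCol {p q : n} (hpq : p ≠ q) (u v : n → R) :
    (((1 : Matrix n n R).updateCol p u).updateCol q v).det = u p * v q - u q * v p := by
  set A := (1 : Matrix n n R).updateCol q v
  have h_swap : (A.updateCol p (Pi.single q 1)).det = -v p := by
    have hperm : A.updateCol p (Pi.single q 1) =
        ((1 : Matrix n n R).updateCol p v).submatrix id (Equiv.swap p q) := by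
      ext i j
      by_cases hjp : j = p
      · subst hjp
        simp [A, hpq.symm, Pi.single_apply, one_apply, eq_comm]
      by_cases hjq : j = q
      · subst hjq
        simp [A, hjp]
      · simp [A, hjp, hjq, Equiv.swap_apply_of_ne_of_ne]
    rw [hperm, det_permute', Equiv.Perm.sign_swap hpq, det_one_updateCol]
    simp
  -- `w` has no `q`-component, so `A = 1.updateCol q v` fixes it
  have h_mul : (A.updateCol p (u - u q • Pi.single q 1)).det = u p * v q := by
    set w := u - u q • Pi.single q 1
    have hwq : w q = 0 := by simp [w]
    have hAw : A *ᵥ w = w := by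
      conv_rhs => rw [← one_mulVec w]
      ext i
      refine Finset.sum_congr rfl fun j _ => ?_
      rcases eq_or_ne j q with rfl | hjq
      · simp [hwq]
      · simp [A, updateCol_ne hjq]
    have hfactor : A.updateCol p w = A * (1 : Matrix n n R).updateCol p w := by
      rw [mul_updateCol, Matrix.mul_one, hAw]
    rw [hfactor, det_mul, det_one_updateCol, det_one_updateCol]
    simp [w, hpq, mul_comm]
  have hu : u = (u - u q • Pi.single q 1) + u q • Pi.single q 1 := by abel
  rw [updateCol_comm _ hpq, hu, det_updateCol_add, det_updateCol_smul, h_swap, h_mul]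
  simp
  ring

theorem det_updateCol_single_eq_adjugate (A : Matrix n n R) (i j : n) :
    (A.updateCol j (Pi.single i 1)).det = adjugate A j i := by
  rw [← cramer_apply, cramer_eq_adjugate_mulVec, mulVec_single_one, col_apply]

theorem det_mul_det_mul_det_updateCol_updateCol (M : Matrix n n R) {p q : n} (hpq : p ≠ q)
    (a b : n) :
    M.det * (M.det * ((M.updateCol p (Pi.single a 1)).updateCol q (Pi.single b 1)).det) =
      M.det * (adjugate M p a * adjugate M q b - adjugate M q a * adjugate M p b) := by
  have hcol (i : n) : (adjugate M).col i = cramer M (Pi.single i 1) := by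
    rw [cramer_eq_adjugate_mulVec, mulVec_single_one]
  have h : M * ((1 : Matrix n n R).updateCol p ((adjugate M).col a)).updateCol q
      ((adjugate M).col b) =
      (M.updateCol p (M.det • Pi.single a 1)).updateCol q (M.det • Pi.single b 1) := by
    rw [mul_updateCol, mul_updateCol, Matrix.mul_one, hcol, hcol, mulVec_cramer, mulVec_cramer]
  have := congrArg det h
  rwa [det_mul, det_one_updateCol_updateCol hpq, det_updateCol_smul, updateCol_comm _ hpq,
    det_updateCol_smul, updateCol_comm _ hpq.symm, eq_comm, col_apply, col_apply, col_apply,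
    col_apply] at this

theorem _root_.RingHom.mapMatrix_updateCol_single {S : Type*} [CommRing S] (f : R →+* S)
    (A : Matrix n n R) (j a : n) :
    f.mapMatrix (A.updateCol j (Pi.single a 1)) = (f.mapMatrix A).updateCol j (Pi.single a 1) := by
  ext i k
  simp [updateCol_apply, Pi.single_apply, apply_ite f]

theorem det_mul_det_updateCol_updateCol (M : Matrix n n R) {p q : n} (hpq : p ≠ q) (a b : n) :
    M.det * ((M.updateCol p (Pi.single a 1)).updateCol q (Pi.single b 1)).det =
      adjugate M p a * adjugate M q b - adjugate M q a * adjugate M p b := by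
  let X := mvPolynomialX n n ℤ
  let f : MvPolynomial (n × n) ℤ →+* R :=
    (MvPolynomial.aeval fun ij : n × n => M ij.1 ij.2).toRingHom
  have hX : f.mapMatrix X = M := mvPolynomialX_mapMatrix_aeval ℤ M
  have hadj (i j : n) : f (adjugate X i j) = adjugate M i j := by
    rw [← hX, ← RingHom.map_adjugate]
    rfl
  have h := congrArg f <| mul_left_cancel₀ (det_mvPolynomialX_ne_zero n ℤ)
    (det_mul_det_mul_det_updateCol_updateCol X hpq a b)
  rwa [map_mul, map_sub, map_mul, map_mul, hadj, hadj, hadj, hadj, RingHom.map_det,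
    RingHom.map_det, RingHom.mapMatrix_updateCol_single, RingHom.mapMatrix_updateCol_single,
    hX] at h

theorem det_updateCol_castSucc_updateCol_last {N : ℕ} (A : Matrix (Fin (N + 1)) (Fin (N + 1)) R)
    (p a : Fin N) :
    ((A.updateCol p.castSucc (Pi.single a.castSucc 1)).updateCol (Fin.last N)
      (Pi.single (Fin.last N) 1)).det = adjugate (A.submatrix Fin.castSucc Fin.castSucc) p a := by
  rw [det_updateCol_single_eq_adjugate, adjugate_fin_succ_eq_det_submatrix, Fin.succAbove_last,
    Even.neg_one_pow ⟨_, rfl⟩, one_mul, ← det_updateCol_single_eq_adjugate]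
  congr 1
  ext i j
  simp [updateCol_apply, Pi.single_apply, Fin.castSucc_inj]

end Matrix

open Matrix

def hankel {R : Type*} (c : ℕ → R) (m n : ℕ) : Matrix (Fin n) (Fin n) R :=
  of fun i j => c (i + j + m)

section Hankel

variable {R : Type*} (c : ℕ → R) (m : ℕ)

theorem hankel_submatrix_castSucc (n : ℕ) :
    (hankel c m (n + 1)).submatrix Fin.castSucc Fin.castSucc = hankel c m n :=
  rfl

theorem hankel_submatrix_succ {n k : ℕ} (f : Fin k → Fin (n + 1)) :
    (hankel c m (n + 1)).submatrix Fin.succ f =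
      (hankel c (m + 1) (n + 1)).submatrix Fin.castSucc f := by
  ext i j
  simp only [hankel, submatrix_apply, of_apply, Fin.val_succ, Fin.val_castSucc]
  ring_nf

end Hankel

section Cofactors

variable (c : ℕ → ℝ) (m : ℕ)

theorem Hk_eq_det_hankel (n : ℕ) : Hk c m n = (hankel c m n).det :=
  rfl

theorem Fk_eq_det_hankel_submatrix (N : ℕ) :
    Fk c m (N + 2) =
      ((hankel c m (N + 3)).submatrix Fin.castSucc (Fin.succAbove ⟨N, by omega⟩)).det := by
  rw [Fk, if_neg (by omega)]
  congr 1
  ext i j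
  simp only [hankel, submatrix_apply, of_apply, Fin.succAbove, Fin.lt_def, Fin.val_castSucc]
  split_ifs <;> simp only [Fin.val_succ, Fin.val_castSucc] <;> congr 1 <;> omega

theorem Gk_eq_det_hankel_submatrix (N : ℕ) :
    Gk c m (N + 1) =
      ((hankel c m (N + 2)).submatrix Fin.castSucc (Fin.succAbove ⟨N, by omega⟩)).det := by
  rw [Gk, if_neg (by omega), ← det_transpose]
  congr 1
  ext i j
  simp only [hankel, transpose_apply, submatrix_apply, of_apply, Fin.succAbove, Fin.lt_def,
    Fin.val_castSucc]
  split_ifs <;> simp only [Fin.val_succ, Fin.val_castSucc] <;> congr 1 <;> omega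

theorem adjugate_hankel_last_last (n : ℕ) :
    adjugate (hankel c m (n + 1)) (Fin.last n) (Fin.last n) = Hk c m n := by
  rw [adjugate_fin_succ_eq_det_submatrix, Fin.succAbove_last, hankel_submatrix_castSucc,
    Even.neg_one_pow ⟨_, rfl⟩, one_mul, Hk_eq_det_hankel]

theorem adjugate_hankel_last_zero (n : ℕ) :
    adjugate (hankel c m (n + 1)) (Fin.last n) 0 = (-1) ^ n * Hk c (m + 1) n := by
  rw [adjugate_fin_succ_eq_det_submatrix, Fin.succAbove_zero, Fin.succAbove_last,
    hankel_submatrix_succ, hankel_submatrix_castSucc, Hk_eq_det_hankel]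
  simp

theorem adjugate_hankel_mk_zero (N : ℕ) :
    adjugate (hankel c m (N + 3)) ⟨N, by omega⟩ 0 = (-1) ^ N * Fk c (m + 1) (N + 2) := by
  rw [adjugate_fin_succ_eq_det_submatrix, Fin.succAbove_zero, hankel_submatrix_succ,
    Fk_eq_det_hankel_submatrix]
  simp

theorem adjugate_hankel_mk_last (N : ℕ) :
    adjugate (hankel c m (N + 3)) ⟨N, by omega⟩ (Fin.last _) = Fk c m (N + 2) := by
  rw [adjugate_fin_succ_eq_det_submatrix, Fin.succAbove_last, Fk_eq_det_hankel_submatrix,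
    Even.neg_one_pow ⟨N + 1, by simp; ring⟩, one_mul]

theorem det_hankel_updateCol_updateCol (N : ℕ) :
    (((hankel c m (N + 3)).updateCol ⟨N, by omega⟩ (Pi.single 0 1)).updateCol (Fin.last _)
      (Pi.single (Fin.last _) 1)).det = (-1) ^ N * Gk c (m + 1) (N + 1) := by
  rw [← Fin.castSucc_zero, ← Fin.castSucc_mk _ _ (by omega), det_updateCol_castSucc_updateCol_last,
    hankel_submatrix_castSucc, adjugate_fin_succ_eq_det_submatrix, Fin.succAbove_zero,
    hankel_submatrix_succ, Gk_eq_det_hankel_submatrix]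
  simp

end Cofactors

/-- `F¹_n H⁰_n − F⁰_n H¹_n = G¹_{n-1} H⁰_{n+1}` for `n ≥ 3`. -/
theorem F_difference_identity (c : ℕ → ℝ) (n : ℕ) (hn : 3 ≤ n) :
    Fk c 1 n * Hk c 0 n - Fk c 0 n * Hk c 1 n = Gk c 1 (n - 1) * Hk c 0 (n + 1) := by
  obtain ⟨N, rfl⟩ : ∃ N, n = N + 2 := ⟨n - 2, by omega⟩
  have hJ := det_mul_det_updateCol_updateCol (hankel c 0 (N + 3)) (p := ⟨N, by omega⟩)
    (q := Fin.last _) (by simp [Fin.ext_iff]) 0 (Fin.last _)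
  rw [det_hankel_updateCol_updateCol, adjugate_hankel_mk_zero, adjugate_hankel_mk_last,
    adjugate_hankel_last_last, adjugate_hankel_last_zero, ← Hk_eq_det_hankel] at hJ
  have hsigned : (-1) ^ N * (Gk c 1 (N + 1) * Hk c 0 (N + 3)) =
      (-1) ^ N * (Fk c 1 (N + 2) * Hk c 0 (N + 2) - Fk c 0 (N + 2) * Hk c 1 (N + 2)) := by
    linear_combination hJ
  rw [show N + 2 - 1 = N + 1 by omega]
  exact (mul_left_cancel₀ (by simp) hsigned).symm
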